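/- Assume 0 < ε < c1·c2·(μ2 − μ1)/(c1·μ1 + c2·μ2). If p > p_ε then E_ε attains its minimum over ℝ uniquely at ω_(ε,1), i.e. E_ε(ω) > E_ε(ω_(ε,1)) for all ω ≠ ω_(ε,1); if p < p_ε then E_ε attains its minimum uniquely at ω_(ε,2); and if p = p_ε then both ω_(ε,1) and ω_(ε,2) minimize E_ε over ℝ. -/

import Mathlib

/-- Relaxed iteration count of a single task with constant `c`, eigenvalue `μ`,
contraction factor `lam`, at initial-guess coefficient `ω`. -/
noncomputable def Leps (ε c μ lam ω : ℝ) : ℝ :=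
  if ω * μ = 1 then 0
  else max 0 (Real.log (ε / (c * |ω * μ - 1|)) / Real.log lam)

/-- Expected relaxed iteration count over the two tasks. -/
noncomputable def Eeps (p ε c1 c2 μ1 μ2 l1 l2 ω : ℝ) : ℝ :=
  p * Leps ε c1 μ1 l1 ω + (1 - p) * Leps ε c2 μ2 l2 ω

/-- `ω_(ε,1) = 1/μ1 − ε/(c1·μ1)`. -/
noncomputable def omegaE1 (ε c1 μ1 : ℝ) : ℝ := 1 / μ1 - ε / (c1 * μ1)

/-- `ω_(ε,2) = 1/μ2 + ε/(c2·μ2)`. -/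
noncomputable def omegaE2 (ε c2 μ2 : ℝ) : ℝ := 1 / μ2 + ε / (c2 * μ2)

/-- Threshold probability `p_ε`. -/
noncomputable def pEps (ε c1 c2 μ1 μ2 l1 l2 : ℝ) : ℝ :=
  Leps ε c2 μ2 l2 (omegaE1 ε c1 μ1) /
  (Leps ε c1 μ1 l1 (omegaE2 ε c2 μ2) + Leps ε c2 μ2 l2 (omegaE1 ε c1 μ1))

/-- Limiting threshold probability `p_0`. -/
noncomputable def pZero (l1 l2 : ℝ) : ℝ :=
  Real.log l1 / (Real.log l1 + Real.log l2)


/-!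
Left of `ω_(ε,1)` the first task's error `1 - ωμ₁` is at least `ε/c₁`, so its count is the
unclipped `log (c₁(1 - ωμ₁)/ε) / log λ₁⁻¹`: concave and strictly decreasing, vanishing at
`ω_(ε,1)`. Symmetrically the second count is concave and strictly increasing right of
`ω_(ε,2)`, vanishing there. Since `ω_(ε,2) < ω_(ε,1)` (this is the bound on `ε`), `E_ε` is concave
on `[ω_(ε,2), ω_(ε,1)]`, so its minimum there is at an endpoint, and outside the interval it
exceeds its value at the nearer endpoint. The endpoint values are `p L₁(ω_(ε,2))` and
`(1 - p) L₂(ω_(ε,1))`, and comparing them is exactly comparing `p` with `p_ε`.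
-/

open Set

section LogAffine

variable {a b κ : ℝ}

lemma concaveOn_log_affine_div (hκ : 0 ≤ κ) :
    ConcaveOn ℝ {x | 0 < a * x + b} fun x ↦ Real.log (a * x + b) / κ := by
  have h := (strictConcaveOn_log_Ioi.concaveOn.comp_affineMap
    (AffineMap.lineMap b (a + b))).smul (inv_nonneg.2 hκ)
  convert h using 1 <;> ext x <;> simp [AffineMap.lineMap_apply_ring', div_eq_inv_mul, mul_comm]

lemma strictMonoOn_log_affine_div (ha : 0 < a) (hκ : 0 < κ) :
    StrictMonoOn (fun x ↦ Real.log (a * x + b) / κ) {x | 0 < a * x + b} :=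
  fun x hx _ _ hxy ↦ div_lt_div_of_pos_right (Real.log_lt_log hx (by nlinarith)) hκ

lemma strictAntiOn_log_affine_div (ha : a < 0) (hκ : 0 < κ) :
    StrictAntiOn (fun x ↦ Real.log (a * x + b) / κ) {x | 0 < a * x + b} :=
  fun _ _ y hy hxy ↦ div_lt_div_of_pos_right (Real.log_lt_log hy (by nlinarith)) hκ

end LogAffine

section ConcaveEndpoints

variable {f : ℝ → ℝ} {a b x : ℝ}

lemma ConcaveOn.right_lt_of_mem_Ioo (hf : ConcaveOn ℝ (Icc a b) f) (hfab : f b < f a)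
    (hx : x ∈ Ioo a b) : f b < f x := by
  by_contra! h
  have hab := hx.1.trans hx.2
  exact h.not_gt <| hf.lt_right_of_left_lt (left_mem_Icc.2 hab.le) (right_mem_Icc.2 hab.le)
    (by rwa [openSegment_eq_Ioo hab]) (h.trans_lt hfab)

lemma ConcaveOn.left_lt_of_mem_Ioo (hf : ConcaveOn ℝ (Icc a b) f) (hfab : f a < f b)
    (hx : x ∈ Ioo a b) : f a < f x := by
  by_contra! h
  have hab := hx.1.trans hx.2
  exact h.not_gt <| hf.left_lt_of_lt_right (left_mem_Icc.2 hab.le) (right_mem_Icc.2 hab.le)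
    (by rwa [openSegment_eq_Ioo hab]) (h.trans_lt hfab)

lemma le_of_concaveOn_Icc (hf : ConcaveOn ℝ (Icc a b) f) (hleft : ∀ x < a, f a < f x)
    (hright : ∀ x, b < x → f b < f x) (hfab : f a = f b) (x : ℝ) : f a ≤ f x := by
  rcases lt_or_ge x a with hxa | hax
  · exact (hleft x hxa).le
  rcases le_or_gt x b with hxb | hbx
  · simpa [hfab] using hf.min_le_of_mem_Icc (left_mem_Icc.2 (hax.trans hxb))
      (right_mem_Icc.2 (hax.trans hxb)) ⟨hax, hxb⟩
  · exact hfab ▸ (hright x hbx).le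

lemma right_lt_of_concaveOn_Icc (hf : ConcaveOn ℝ (Icc a b) f) (hleft : ∀ x < a, f a < f x)
    (hright : ∀ x, b < x → f b < f x) (hfab : f b < f a) (hx : x ≠ b) : f b < f x := by
  rcases lt_trichotomy x a with hxa | rfl | hax
  · exact hfab.trans (hleft x hxa)
  · exact hfab
  rcases hx.lt_or_gt with hxb | hbx
  · exact hf.right_lt_of_mem_Ioo hfab ⟨hax, hxb⟩
  · exact hright x hbx

lemma left_lt_of_concaveOn_Icc (hf : ConcaveOn ℝ (Icc a b) f) (hleft : ∀ x < a, f a < f x)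
    (hright : ∀ x, b < x → f b < f x) (hfab : f a < f b) (hx : x ≠ a) : f a < f x := by
  rcases lt_trichotomy x b with hxb | rfl | hbx
  · rcases hx.lt_or_gt with hxa | hax
    · exact hleft x hxa
    · exact hf.left_lt_of_mem_Ioo hfab ⟨hax, hxb⟩
  · exact hfab
  · exact hfab.trans (hright x hbx)

end ConcaveEndpoints

section IterationCount

variable {ε c μ lam ω : ℝ}

lemma Leps_nonneg (ε c μ lam ω : ℝ) : 0 ≤ Leps ε c μ lam ω := by
  unfold Leps
  split_ifs
  exacts [le_rfl, le_max_left _ _]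

lemma Leps_of_abs_eq (hε : ε ≠ 0) (hc : c ≠ 0) (h : |ω * μ - 1| = ε / c) :
    Leps ε c μ lam ω = 0 := by
  simp [Leps, h, mul_div_cancel₀ _ hc, hε]

lemma Leps_eq_log_div (hε : 0 < ε) (hc : 0 < c) (hlam : lam ∈ Ioo 0 1)
    (h : ε / c ≤ |ω * μ - 1|) :
    Leps ε c μ lam ω = Real.log (c / ε * |ω * μ - 1|) / -Real.log lam := by
  have hpos : 0 < |ω * μ - 1| := (div_pos hε hc).trans_le h
  have hone : 1 ≤ c / ε * |ω * μ - 1| := by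
    rw [div_mul_eq_mul_div, one_le_div hε, ← div_le_iff₀' hc]
    exact h
  have hne : ω * μ ≠ 1 := fun h1 ↦ by simp [h1] at hpos
  have hlog : Real.log (ε / (c * |ω * μ - 1|)) = -Real.log (c / ε * |ω * μ - 1|) := by
    rw [← Real.log_inv]
    congr 1
    field_simp
  rw [Leps, if_neg hne, hlog, neg_div, ← div_neg, max_eq_right]
  exact div_nonneg (Real.log_nonneg hone) (neg_nonneg.2 (Real.log_nonpos hlam.1.le hlam.2.le))

lemma omegaE1_mul (hc : c ≠ 0) (hμ : μ ≠ 0) : omegaE1 ε c μ * μ = 1 - ε / c := by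
  unfold omegaE1
  field_simp

lemma omegaE2_mul (hc : c ≠ 0) (hμ : μ ≠ 0) : omegaE2 ε c μ * μ = 1 + ε / c := by
  unfold omegaE2
  field_simp

lemma Leps_omegaE1 (hε : 0 < ε) (hc : 0 < c) (hμ : μ ≠ 0) :
    Leps ε c μ lam (omegaE1 ε c μ) = 0 :=
  Leps_of_abs_eq hε.ne' hc.ne' <| by
    rw [omegaE1_mul hc.ne' hμ, sub_sub_cancel_left, abs_neg, abs_of_pos (div_pos hε hc)]

lemma Leps_omegaE2 (hε : 0 < ε) (hc : 0 < c) (hμ : μ ≠ 0) :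
    Leps ε c μ lam (omegaE2 ε c μ) = 0 :=
  Leps_of_abs_eq hε.ne' hc.ne' <| by
    rw [omegaE2_mul hc.ne' hμ, add_sub_cancel_left, abs_of_pos (div_pos hε hc)]

lemma le_one_sub_mul_of_le_omegaE1 (hc : 0 < c) (hμ : 0 < μ) (hω : ω ≤ omegaE1 ε c μ) :
    ε / c ≤ 1 - ω * μ := by
  have := mul_le_mul_of_nonneg_right hω hμ.le
  rw [omegaE1_mul hc.ne' hμ.ne'] at this
  linarith

lemma le_mul_sub_one_of_omegaE2_le (hc : 0 < c) (hμ : 0 < μ) (hω : omegaE2 ε c μ ≤ ω) :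
    ε / c ≤ ω * μ - 1 := by
  have := mul_le_mul_of_nonneg_right hω hμ.le
  rw [omegaE2_mul hc.ne' hμ.ne'] at this
  linarith

lemma Iic_omegaE1_subset (hε : 0 < ε) (hc : 0 < c) (hμ : 0 < μ) :
    Iic (omegaE1 ε c μ) ⊆ {x | 0 < -(c / ε * μ) * x + c / ε} := fun x hx ↦ by
  have h := le_one_sub_mul_of_le_omegaE1 hc hμ hx
  have : 0 < c / ε * (1 - x * μ) := mul_pos (div_pos hc hε) ((div_pos hε hc).trans_le h)
  rw [mem_ofPred_eq]
  linarith

lemma Ici_omegaE2_subset (hε : 0 < ε) (hc : 0 < c) (hμ : 0 < μ) :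
    Ici (omegaE2 ε c μ) ⊆ {x | 0 < c / ε * μ * x + -(c / ε)} := fun x hx ↦ by
  have h := le_mul_sub_one_of_omegaE2_le hc hμ hx
  have : 0 < c / ε * (x * μ - 1) := mul_pos (div_pos hc hε) ((div_pos hε hc).trans_le h)
  rw [mem_ofPred_eq]
  linarith

lemma Leps_eqOn_Iic_omegaE1 (hε : 0 < ε) (hc : 0 < c) (hμ : 0 < μ) (hlam : lam ∈ Ioo 0 1) :
    EqOn (fun x ↦ Real.log (-(c / ε * μ) * x + c / ε) / -Real.log lam) (Leps ε c μ lam)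
      (Iic (omegaE1 ε c μ)) := fun x hx ↦ by
  have h := le_one_sub_mul_of_le_omegaE1 hc hμ hx
  have habs : |x * μ - 1| = 1 - x * μ := by
    rw [abs_sub_comm, abs_of_nonneg ((div_pos hε hc).le.trans h)]
  rw [Leps_eq_log_div hε hc hlam (habs.symm ▸ h), habs]
  ring_nf

lemma Leps_eqOn_Ici_omegaE2 (hε : 0 < ε) (hc : 0 < c) (hμ : 0 < μ) (hlam : lam ∈ Ioo 0 1) :
    EqOn (fun x ↦ Real.log (c / ε * μ * x + -(c / ε)) / -Real.log lam) (Leps ε c μ lam)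
      (Ici (omegaE2 ε c μ)) := fun x hx ↦ by
  have h := le_mul_sub_one_of_omegaE2_le hc hμ hx
  have habs : |x * μ - 1| = x * μ - 1 := abs_of_nonneg ((div_pos hε hc).le.trans h)
  rw [Leps_eq_log_div hε hc hlam (habs.symm ▸ h), habs]
  ring_nf

lemma concaveOn_Leps_Iic_omegaE1 (hε : 0 < ε) (hc : 0 < c) (hμ : 0 < μ)
    (hlam : lam ∈ Ioo 0 1) : ConcaveOn ℝ (Iic (omegaE1 ε c μ)) (Leps ε c μ lam) :=
  ((concaveOn_log_affine_div (neg_nonneg.2 (Real.log_nonpos hlam.1.le hlam.2.le))).subset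
    (Iic_omegaE1_subset hε hc hμ) (convex_Iic _)).congr (Leps_eqOn_Iic_omegaE1 hε hc hμ hlam)

lemma concaveOn_Leps_Ici_omegaE2 (hε : 0 < ε) (hc : 0 < c) (hμ : 0 < μ)
    (hlam : lam ∈ Ioo 0 1) : ConcaveOn ℝ (Ici (omegaE2 ε c μ)) (Leps ε c μ lam) :=
  ((concaveOn_log_affine_div (neg_nonneg.2 (Real.log_nonpos hlam.1.le hlam.2.le))).subset
    (Ici_omegaE2_subset hε hc hμ) (convex_Ici _)).congr (Leps_eqOn_Ici_omegaE2 hε hc hμ hlam)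

lemma strictAntiOn_Leps_Iic_omegaE1 (hε : 0 < ε) (hc : 0 < c) (hμ : 0 < μ)
    (hlam : lam ∈ Ioo 0 1) : StrictAntiOn (Leps ε c μ lam) (Iic (omegaE1 ε c μ)) :=
  ((strictAntiOn_log_affine_div (neg_neg_of_pos (by positivity))
    (neg_pos.2 (Real.log_neg hlam.1 hlam.2))).mono (Iic_omegaE1_subset hε hc hμ)).congr
    (Leps_eqOn_Iic_omegaE1 hε hc hμ hlam)

lemma strictMonoOn_Leps_Ici_omegaE2 (hε : 0 < ε) (hc : 0 < c) (hμ : 0 < μ)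
    (hlam : lam ∈ Ioo 0 1) : StrictMonoOn (Leps ε c μ lam) (Ici (omegaE2 ε c μ)) :=
  ((strictMonoOn_log_affine_div (by positivity)
    (neg_pos.2 (Real.log_neg hlam.1 hlam.2))).mono (Ici_omegaE2_subset hε hc hμ)).congr
    (Leps_eqOn_Ici_omegaE2 hε hc hμ hlam)

lemma Leps_pos_of_lt_omegaE1 (hε : 0 < ε) (hc : 0 < c) (hμ : 0 < μ) (hlam : lam ∈ Ioo 0 1)
    (hω : ω < omegaE1 ε c μ) : 0 < Leps ε c μ lam ω :=
  Leps_omegaE1 hε hc hμ.ne' (lam := lam) ▸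
    strictAntiOn_Leps_Iic_omegaE1 hε hc hμ hlam hω.le self_mem_Iic hω

lemma Leps_pos_of_omegaE2_lt (hε : 0 < ε) (hc : 0 < c) (hμ : 0 < μ) (hlam : lam ∈ Ioo 0 1)
    (hω : omegaE2 ε c μ < ω) : 0 < Leps ε c μ lam ω :=
  Leps_omegaE2 hε hc hμ.ne' (lam := lam) ▸
    strictMonoOn_Leps_Ici_omegaE2 hε hc hμ hlam self_mem_Ici hω.le hω

end IterationCount

lemma omegaE2_lt_omegaE1 {ε c1 c2 μ1 μ2 : ℝ} (hc1 : 0 < c1) (hc2 : 0 < c2) (hμ1 : 0 < μ1)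
    (hμ12 : μ1 < μ2) (hεlt : ε < c1 * c2 * (μ2 - μ1) / (c1 * μ1 + c2 * μ2)) :
    omegaE2 ε c2 μ2 < omegaE1 ε c1 μ1 := by
  have hμ2 := hμ1.trans hμ12
  rw [lt_div_iff₀ (by positivity)] at hεlt
  have h1 : omegaE1 ε c1 μ1 = (c1 - ε) / (c1 * μ1) := by unfold omegaE1; field_simp
  have h2 : omegaE2 ε c2 μ2 = (c2 + ε) / (c2 * μ2) := by unfold omegaE2; field_simp
  rw [h1, h2, div_lt_div_iff₀ (by positivity) (by positivity)]
  nlinarith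

section Expected

variable {p ε c1 c2 μ1 μ2 l1 l2 ω : ℝ}

lemma Eeps_omegaE1 (hε : 0 < ε) (hc1 : 0 < c1) (hμ1 : μ1 ≠ 0) :
    Eeps p ε c1 c2 μ1 μ2 l1 l2 (omegaE1 ε c1 μ1) =
      (1 - p) * Leps ε c2 μ2 l2 (omegaE1 ε c1 μ1) := by
  simp [Eeps, Leps_omegaE1 hε hc1 hμ1]

lemma Eeps_omegaE2 (hε : 0 < ε) (hc2 : 0 < c2) (hμ2 : μ2 ≠ 0) :
    Eeps p ε c1 c2 μ1 μ2 l1 l2 (omegaE2 ε c2 μ2) = p * Leps ε c1 μ1 l1 (omegaE2 ε c2 μ2) := by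
  simp [Eeps, Leps_omegaE2 hε hc2 hμ2]

lemma concaveOn_Eeps (hε : 0 < ε) (hc1 : 0 < c1) (hc2 : 0 < c2) (hμ1 : 0 < μ1) (hμ2 : 0 < μ2)
    (hl1 : l1 ∈ Ioo 0 1) (hl2 : l2 ∈ Ioo 0 1) (hp0 : 0 ≤ p) (hp1 : p ≤ 1) :
    ConcaveOn ℝ (Icc (omegaE2 ε c2 μ2) (omegaE1 ε c1 μ1)) (Eeps p ε c1 c2 μ1 μ2 l1 l2) :=
  (((concaveOn_Leps_Iic_omegaE1 hε hc1 hμ1 hl1).subset Icc_subset_Iic_self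
      (convex_Icc _ _)).smul hp0).add
    (((concaveOn_Leps_Ici_omegaE2 hε hc2 hμ2 hl2).subset Icc_subset_Ici_self
      (convex_Icc _ _)).smul (sub_nonneg.2 hp1))

lemma Eeps_omegaE2_lt_of_lt (hε : 0 < ε) (hc1 : 0 < c1) (hc2 : 0 < c2) (hμ1 : 0 < μ1)
    (hμ2 : μ2 ≠ 0) (hl1 : l1 ∈ Ioo 0 1) (hp0 : 0 < p) (hp1 : p ≤ 1)
    (hw : omegaE2 ε c2 μ2 ≤ omegaE1 ε c1 μ1) (hω : ω < omegaE2 ε c2 μ2) :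
    Eeps p ε c1 c2 μ1 μ2 l1 l2 (omegaE2 ε c2 μ2) < Eeps p ε c1 c2 μ1 μ2 l1 l2 ω := by
  have hL1 := strictAntiOn_Leps_Iic_omegaE1 hε hc1 hμ1 hl1 (hω.le.trans hw) hw hω
  rw [Eeps_omegaE2 hε hc2 hμ2, Eeps]
  nlinarith [Leps_nonneg ε c2 μ2 l2 ω]

lemma Eeps_omegaE1_lt_of_gt (hε : 0 < ε) (hc1 : 0 < c1) (hc2 : 0 < c2) (hμ1 : μ1 ≠ 0)
    (hμ2 : 0 < μ2) (hl2 : l2 ∈ Ioo 0 1) (hp0 : 0 ≤ p) (hp1 : p < 1)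
    (hw : omegaE2 ε c2 μ2 ≤ omegaE1 ε c1 μ1) (hω : omegaE1 ε c1 μ1 < ω) :
    Eeps p ε c1 c2 μ1 μ2 l1 l2 (omegaE1 ε c1 μ1) < Eeps p ε c1 c2 μ1 μ2 l1 l2 ω := by
  have hL2 := strictMonoOn_Leps_Ici_omegaE2 hε hc2 hμ2 hl2 hw (hw.trans hω.le) hω
  rw [Eeps_omegaE1 hε hc1 hμ1, Eeps]
  nlinarith [Leps_nonneg ε c1 μ1 l1 ω]

end Expected

/-- Location of the (unique) minimizer of `E_ε` depending on how `p` compares to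
the threshold `p_ε`. -/
theorem Eeps_minimizer_cases (μ1 μ2 l1 l2 c1 c2 p : ℝ)
    (hμ1 : 0 < μ1) (hμ12 : μ1 < μ2) (hμ2 : μ2 < 2)
    (hl1 : l1 = 1 - μ1 / 2) (hl2 : l2 = 1 - μ2 / 2)
    (hc1 : 0 < c1) (hc2 : 0 < c2) (hp0 : 0 < p) (hp1 : p < 1)
    (ε : ℝ) (hε : 0 < ε)
    (hεlt : ε < c1 * c2 * (μ2 - μ1) / (c1 * μ1 + c2 * μ2)) :
    (p > pEps ε c1 c2 μ1 μ2 l1 l2 →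
      ∀ ω : ℝ, ω ≠ omegaE1 ε c1 μ1 →
        Eeps p ε c1 c2 μ1 μ2 l1 l2 ω >
          Eeps p ε c1 c2 μ1 μ2 l1 l2 (omegaE1 ε c1 μ1)) ∧
    (p < pEps ε c1 c2 μ1 μ2 l1 l2 →
      ∀ ω : ℝ, ω ≠ omegaE2 ε c2 μ2 →
        Eeps p ε c1 c2 μ1 μ2 l1 l2 ω >
          Eeps p ε c1 c2 μ1 μ2 l1 l2 (omegaE2 ε c2 μ2)) ∧
    (p = pEps ε c1 c2 μ1 μ2 l1 l2 →
      (∀ ω : ℝ, Eeps p ε c1 c2 μ1 μ2 l1 l2 ω ≥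
          Eeps p ε c1 c2 μ1 μ2 l1 l2 (omegaE1 ε c1 μ1)) ∧
      (∀ ω : ℝ, Eeps p ε c1 c2 μ1 μ2 l1 l2 ω ≥
          Eeps p ε c1 c2 μ1 μ2 l1 l2 (omegaE2 ε c2 μ2))) := by
  have hμ2' : 0 < μ2 := hμ1.trans hμ12
  have hl1' : l1 ∈ Ioo 0 1 := by constructor <;> linarith
  have hl2' : l2 ∈ Ioo 0 1 := by constructor <;> linarith
  set w1 := omegaE1 ε c1 μ1
  set w2 := omegaE2 ε c2 μ2
  set E := Eeps p ε c1 c2 μ1 μ2 l1 l2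
  have hw : w2 < w1 := omegaE2_lt_omegaE1 hc1 hc2 hμ1 hμ12 hεlt
  have hconc : ConcaveOn ℝ (Icc w2 w1) E :=
    concaveOn_Eeps hε hc1 hc2 hμ1 hμ2' hl1' hl2' hp0.le hp1.le
  have hleft : ∀ ω < w2, E w2 < E ω :=
    fun _ ↦ Eeps_omegaE2_lt_of_lt hε hc1 hc2 hμ1 hμ2'.ne' hl1' hp0 hp1.le hw.le
  have hright : ∀ ω, w1 < ω → E w1 < E ω :=
    fun _ ↦ Eeps_omegaE1_lt_of_gt hε hc1 hc2 hμ1.ne' hμ2' hl2' hp0.le hp1 hw.le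
  have hL1w2 : 0 < Leps ε c1 μ1 l1 w2 := Leps_pos_of_lt_omegaE1 hε hc1 hμ1 hl1' hw
  have hL2w1 : 0 < Leps ε c2 μ2 l2 w1 := Leps_pos_of_omegaE2_lt hε hc2 hμ2' hl2' hw
  have hE1 : E w1 = (1 - p) * Leps ε c2 μ2 l2 w1 := Eeps_omegaE1 hε hc1 hμ1.ne'
  have hE2 : E w2 = p * Leps ε c1 μ1 l1 w2 := Eeps_omegaE2 hε hc2 hμ2'.ne'
  unfold pEps
  refine ⟨fun hp ω hω ↦ ?_, fun hp ω hω ↦ ?_, fun hp ↦ ?_⟩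
  · rw [gt_iff_lt, div_lt_iff₀ (by positivity)] at hp
    exact right_lt_of_concaveOn_Icc hconc hleft hright (by rw [hE1, hE2]; linarith) hω
  · rw [lt_div_iff₀ (by positivity)] at hp
    exact left_lt_of_concaveOn_Icc hconc hleft hright (by rw [hE1, hE2]; linarith) hω
  · rw [eq_div_iff (by positivity)] at hp
    have hE : E w2 = E w1 := by rw [hE1, hE2]; linarith
    exact ⟨fun ω ↦ hE ▸ le_of_concaveOn_Icc hconc hleft hright hE ω,
      le_of_concaveOn_Icc hconc hleft hright hE⟩
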